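/- For every integer h ≥ 1, the transmission of the vertex 0 in MC(2^h) (equivalently, the distance spectral radius of MC(2^h)) equals (2^h(3h+1) − (−1)^h)/9; that is, 9 · Σ_{v ∈ ℤ/2^hℤ} d(0,v) = 2^h(3h+1) − (−1)^h as integers. -/

import Mathlib

/-- The circulant graph `Cay(Z_n, S)`: vertices are `ZMod n`, and distinct
vertices `x, y` are adjacent iff `x - y ≡ s` or `y - x ≡ s (mod n)` for some `s ∈ S`. -/
def circulantGraph (n : ℕ) (S : Set ℕ) : SimpleGraph (ZMod n) where
  Adj x y := x ≠ y ∧ ∃ s ∈ S, (x - y = (s : ZMod n) ∨ y - x = (s : ZMod n))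
  symm := by
    constructor
    rintro x y ⟨hne, s, hs, h⟩
    exact ⟨hne.symm, s, hs, h.symm⟩
  loopless := by
    constructor
    rintro x ⟨hne, -⟩
    exact hne rfl

/-- The multiplicative circulant graph `MC(m^h) = Cay(Z_{m^h}, {m^0, m^1, …, m^{h-1}})`. -/
def MCGraph (m h : ℕ) : SimpleGraph (ZMod (m ^ h)) :=
  circulantGraph (m ^ h) {s | ∃ i < h, s = m ^ i}

/-- minimal signed binary weight with exponents `< h`, mod `2^h` (on nat representatives) -/
def Dw : ℕ → ℕ → ℕ
  | 0, _ => 0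
  | h+1, v => if v % 2 = 0 then Dw h (v / 2) else 1 + min (Dw h (v / 2)) (Dw h (v / 2 + 1))

lemma Dw_zero (h : ℕ) : Dw h 0 = 0 := by
  induction h with
  | zero => rfl
  | succ h ih => simp [Dw, ih]

lemma Dw_even (h k : ℕ) : Dw (h+1) (2*k) = Dw h k := by
  simp [Dw, Nat.mul_div_cancel_left, Nat.mul_mod_right]

lemma Dw_odd (h k : ℕ) : Dw (h+1) (2*k+1) = 1 + min (Dw h k) (Dw h (k+1)) := by
  have h1 : (2*k+1) % 2 = 1 := by omega
  have h2 : (2*k+1) / 2 = k := by omega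
  simp [Dw, h1, h2]

lemma Dw_period (h : ℕ) : ∀ v, Dw h (v + 2^h) = Dw h v := by
  induction h with
  | zero => intro v; rfl
  | succ h ih =>
    intro v
    have hp : v + 2^(h+1) = v + 2*2^h := by ring_nf
    rcases Nat.even_or_odd v with ⟨k, hk⟩ | ⟨k, hk⟩
    · subst hk
      have : k + k + 2^(h+1) = 2*(k + 2^h) := by ring_nf
      rw [show k + k = 2*k by ring] at this ⊢
      rw [this, Dw_even, Dw_even, ih]
    · subst hk
      have : 2*k+1 + 2^(h+1) = 2*(k + 2^h) + 1 := by ring_nf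
      rw [this, Dw_odd, Dw_odd, ih, show k + 2^h + 1 = (k+1) + 2^h by ring, ih]

lemma Dw_add_mul (h v k : ℕ) : Dw h (v + 2^h * k) = Dw h v := by
  induction k with
  | zero => simp
  | succ k ih => rw [show v + 2^h*(k+1) = (v + 2^h*k) + 2^h by ring, Dw_period, ih]

lemma Dw_mod (h v : ℕ) : Dw h (v % 2^h) = Dw h v := by
  conv_rhs => rw [← Nat.mod_add_div v (2^h)]
  rw [Dw_add_mul]

lemma Dw_congr {h a b : ℕ} (hab : a % 2^h = b % 2^h) : Dw h a = Dw h b := by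
  rw [← Dw_mod h a, hab, Dw_mod]

/-- key step lemma -/
lemma Dw_step (h : ℕ) : ∀ i < h, ∀ v, Dw h (v + 2^i) ≤ Dw h v + 1 ∧ Dw h v ≤ Dw h (v + 2^i) + 1 := by
  induction h with
  | zero => intro i hi; omega
  | succ h ih =>
    intro i hi v
    -- helper: level-h one-step (trivial if h = 0)
    have step0 : ∀ w, Dw h (w + 1) ≤ Dw h w + 1 ∧ Dw h w ≤ Dw h (w + 1) + 1 := by
      intro w
      cases h with
      | zero => simp [Dw]
      | succ h' => exact ih 0 (Nat.succ_pos _) w |>.imp (by simpa using id) (by simpa using id)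
    match i with
    | 0 =>
      rcases Nat.even_or_odd v with ⟨k, hk⟩ | ⟨k, hk⟩
      · subst hk
        rw [show k + k + 2^0 = 2*k + 1 from by ring, show k + k = 2*k from by ring, Dw_even, Dw_odd]
        have := step0 k
        omega
      · subst hk
        rw [show 2*k+1+2^0 = 2*(k+1) from by ring, Dw_odd, Dw_even]
        have := step0 k
        omega
    | (i+1) =>
      have hih := ih i (by omega)
      rcases Nat.even_or_odd v with ⟨k, hk⟩ | ⟨k, hk⟩
      · subst hk
        rw [show k + k = 2*k from by ring,
          show 2*k + 2^(i+1) = 2*(k + 2^i) from by ring, Dw_even, Dw_even]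
        exact hih k
      · subst hk
        rw [show 2*k+1 + 2^(i+1) = 2*(k + 2^i)+1 from by ring, Dw_odd, Dw_odd]
        have h1 := hih k
        have h2 := hih (k+1)
        rw [show k + 2^i + 1 = (k+1) + 2^i from by ring]
        omega

lemma sub_eq_natCast_iff {n : ℕ} [NeZero n] (a b : ZMod n) (s : ℕ) :
    a - b = (s : ZMod n) ↔ (b.val + s) % n = a.val := by
  rw [sub_eq_iff_eq_add]
  constructor
  · rintro rfl
    rw [ZMod.val_add, ZMod.val_natCast, Nat.add_comm (s % n), Nat.add_mod_mod]
  · intro hv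
    apply ZMod.val_injective
    rw [ZMod.val_add, ZMod.val_natCast, Nat.add_comm (s % n), Nat.add_mod_mod, hv]

lemma MC_adj_iff (h : ℕ) (x y : ZMod (2^h)) :
    (MCGraph 2 h).Adj x y ↔ x ≠ y ∧
      ∃ i < h, ((y.val + 2^i) % 2^h = x.val ∨ (x.val + 2^i) % 2^h = y.val) := by
  constructor
  · rintro ⟨hne, s, ⟨i, hi, rfl⟩, hc⟩
    exact ⟨hne, i, hi, by
      rcases hc with hc | hc
      · exact Or.inl ((sub_eq_natCast_iff x y _).mp hc)
      · exact Or.inr ((sub_eq_natCast_iff y x _).mp hc)⟩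
  · rintro ⟨hne, i, hi, hc⟩
    refine ⟨hne, 2^i, ⟨i, hi, rfl⟩, ?_⟩
    rcases hc with hc | hc
    · exact Or.inl ((sub_eq_natCast_iff x y _).mpr hc)
    · exact Or.inr ((sub_eq_natCast_iff y x _).mpr hc)

open SimpleGraph

lemma dbl_val {h : ℕ} (x : ZMod (2^h)) :
    ((((2 * x.val : ℕ) : ZMod (2^(h+1))) : ZMod (2^(h+1)))).val = 2 * x.val := by
  apply ZMod.val_cast_of_lt
  have := x.val_lt
  rw [pow_succ]
  omega

/-- the doubling graph homomorphism -/
def dblHom (h : ℕ) : MCGraph 2 h →g MCGraph 2 (h+1) where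
  toFun x := ((2 * x.val : ℕ) : ZMod (2^(h+1)))
  map_rel' := by
    intro x y hxy
    rw [MC_adj_iff] at hxy ⊢
    obtain ⟨hne, i, hi, hc⟩ := hxy
    constructor
    · intro heq
      apply hne
      apply ZMod.val_injective
      have := congrArg ZMod.val heq
      rw [dbl_val, dbl_val] at this
      omega
    · refine ⟨i+1, by omega, ?_⟩
      rw [dbl_val, dbl_val]
      have key : ∀ a b : ℕ, (a + 2^i) % 2^h = b → (2*a + 2^(i+1)) % 2^(h+1) = 2*b := by
        intro a b hab
        rw [pow_succ, pow_succ, Nat.mul_comm (2^h) 2, Nat.mul_comm (2^i) 2,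
          show 2*a + 2*2^i = 2*(a + 2^i) from by ring, Nat.mul_mod_mul_left, hab]
      rcases hc with hc | hc
      · exact Or.inl (key _ _ hc)
      · exact Or.inr (key _ _ hc)

lemma exists_walk (h : ℕ) : ∀ v : ZMod (2^h), ∃ p : (MCGraph 2 h).Walk 0 v, p.length ≤ Dw h v.val := by
  induction h with
  | zero =>
    intro v
    have hs : Subsingleton (ZMod (2^0)) := by
      rw [pow_zero]
      infer_instance
    have : v = 0 := Subsingleton.elim _ _
    subst this
    exact ⟨Walk.nil, by simp⟩
  | succ h ih =>
    intro v
    have hvlt : v.val < 2^(h+1) := v.val_lt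
    rcases Nat.even_or_odd v.val with ⟨k, hk⟩ | ⟨k, hk⟩
    · -- even
      have hk2 : v.val = 2*k := by omega
      have hps : (2:ℕ)^(h+1) = 2^h * 2 := pow_succ 2 h
      have hklt : k < 2^h := by omega
      obtain ⟨p, hp⟩ := ih (k : ZMod (2^h))
      have hval : ((k : ZMod (2^h))).val = k := ZMod.val_cast_of_lt hklt
      refine ⟨((p.map (dblHom h)).copy ?_ ?_), ?_⟩
      · show ((2 * (0 : ZMod (2^h)).val : ℕ) : ZMod (2^(h+1))) = 0
        simp
      · show ((2 * ((k : ZMod (2^h))).val : ℕ) : ZMod (2^(h+1))) = v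
        rw [hval, ← hk2]
        exact ZMod.natCast_rightInverse v
      · rw [Walk.length_copy, Walk.length_map, hk2, Dw_even]
        rw [hval] at hp
        exact hp
    · -- odd
      have hps : (2:ℕ)^(h+1) = 2^h * 2 := pow_succ 2 h
      have hklt : k < 2^h := by omega
      rw [hk, Dw_odd]
      by_cases hmin : Dw h k ≤ Dw h (k+1)
      · obtain ⟨p, hp⟩ := ih (k : ZMod (2^h))
        have hval : ((k : ZMod (2^h))).val = k := ZMod.val_cast_of_lt hklt
        have hadj : (MCGraph 2 (h+1)).Adj ((dblHom h) (k : ZMod (2^h))) v := by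
          show (MCGraph 2 (h+1)).Adj ((2 * ((k : ZMod (2^h))).val : ℕ) : ZMod (2^(h+1))) v
          rw [MC_adj_iff]
          have hv2 : (((2 * ((k : ZMod (2^h))).val : ℕ) : ZMod (2^(h+1)))).val = 2*k := by
            rw [dbl_val, hval]
          constructor
          · intro heq
            have := congrArg ZMod.val heq
            rw [hv2] at this
            omega
          · refine ⟨0, by omega, Or.inr ?_⟩
            rw [hv2, pow_zero, Nat.mod_eq_of_lt (by omega), hk]
        refine ⟨(((p.map (dblHom h)).copy ?_ rfl).concat hadj), ?_⟩
        · show ((2 * (0 : ZMod (2^h)).val : ℕ) : ZMod (2^(h+1))) = 0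
          simp
        · rw [Walk.length_concat, Walk.length_copy, Walk.length_map]
          rw [hval] at hp
          omega
      · obtain ⟨p, hp⟩ := ih ((k+1 : ℕ) : ZMod (2^h))
        have hval : (((k+1 : ℕ) : ZMod (2^h))).val = (k+1) % 2^h := ZMod.val_natCast _ _
        have hDw : Dw h ((((k+1 : ℕ) : ZMod (2^h)))).val = Dw h (k+1) := by
          rw [hval, Dw_mod]
        have hadj : (MCGraph 2 (h+1)).Adj ((dblHom h) ((k+1:ℕ) : ZMod (2^h))) v := by
          show (MCGraph 2 (h+1)).Adj ((2 * (((k+1:ℕ) : ZMod (2^h))).val : ℕ) : ZMod (2^(h+1))) v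
          rw [MC_adj_iff]
          have hv2 : (((2 * (((k+1:ℕ) : ZMod (2^h))).val : ℕ) : ZMod (2^(h+1)))).val
              = 2*((k+1) % 2^h) := by rw [dbl_val, hval]
          constructor
          · intro heq
            have := congrArg ZMod.val heq
            rw [hv2, hk] at this
            omega
          · refine ⟨0, by omega, Or.inl ?_⟩
            rw [hv2, hk, pow_zero, show 2*k+1+1 = 2*(k+1) from by ring,
              pow_succ, Nat.mul_comm (2^h) 2, Nat.mul_mod_mul_left]
        refine ⟨(((p.map (dblHom h)).copy ?_ rfl).concat hadj), ?_⟩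
        · show ((2 * (0 : ZMod (2^h)).val : ℕ) : ZMod (2^(h+1))) = 0
          simp
        · rw [Walk.length_concat, Walk.length_copy, Walk.length_map]
          rw [hDw] at hp
          omega

lemma Dw_le_of_adj {h : ℕ} {u a : ZMod (2^h)} (hadj : (MCGraph 2 h).Adj u a) :
    Dw h a.val ≤ Dw h u.val + 1 := by
  rw [MC_adj_iff] at hadj
  obtain ⟨-, i, hi, hc⟩ := hadj
  rcases hc with hc | hc
  · have := (Dw_step h i hi a.val).2
    rw [← Dw_mod h (a.val + 2^i), hc] at this
    exact this
  · rw [← hc, Dw_mod]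
    exact (Dw_step h i hi u.val).1

lemma Dw_le_walk {h : ℕ} {u v : ZMod (2^h)} (p : (MCGraph 2 h).Walk u v) :
    Dw h v.val ≤ Dw h u.val + p.length := by
  induction p with
  | nil => simp
  | @cons a b c hadj q ih =>
    have := Dw_le_of_adj hadj
    rw [Walk.length_cons]
    omega

lemma MC_dist_eq (h : ℕ) (v : ZMod (2^h)) : (MCGraph 2 h).dist 0 v = Dw h v.val := by
  obtain ⟨p, hp⟩ := exists_walk h v
  have hreach : (MCGraph 2 h).Reachable 0 v := ⟨p⟩
  obtain ⟨q, hq⟩ := hreach.exists_walk_length_eq_dist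
  have h1 : (MCGraph 2 h).dist 0 v ≤ Dw h v.val := le_trans (SimpleGraph.dist_le p) hp
  have h2 := Dw_le_walk q
  rw [ZMod.val_zero, Dw_zero] at h2
  omega

lemma sum_range_two_mul {M : Type*} [AddCommMonoid M] (f : ℕ → M) (n : ℕ) :
    ∑ i ∈ Finset.range (2*n), f i = ∑ i ∈ Finset.range n, (f (2*i) + f (2*i+1)) := by
  induction n with
  | zero => simp
  | succ n ih =>
    rw [show 2*(n+1) = (2*n)+1+1 from by ring, Finset.sum_range_succ, Finset.sum_range_succ, ih,
      Finset.sum_range_succ, add_assoc]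

def Sw (h : ℕ) : ℕ := ∑ k ∈ Finset.range (2^h), Dw h k

lemma Dw_step1 (h t : ℕ) : Dw h (t+1) ≤ Dw h t + 1 ∧ Dw h t ≤ Dw h (t+1) + 1 := by
  cases h with
  | zero => simp [Dw]
  | succ h =>
    have := Dw_step (h+1) 0 (Nat.succ_pos h) t
    simpa using this

lemma Sw_succ (h : ℕ) : Sw (h+1)
    = Sw h + 2^h + ∑ k ∈ Finset.range (2^h), min (Dw h k) (Dw h (k+1)) := by
  unfold Sw
  rw [show (2:ℕ)^(h+1) = 2*2^h from by ring, sum_range_two_mul]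
  have : ∀ i, Dw (h+1) (2*i) + Dw (h+1) (2*i+1)
      = Dw h i + (1 + min (Dw h i) (Dw h (i+1))) := by
    intro i
    rw [Dw_even, Dw_odd]
  rw [Finset.sum_congr rfl fun i _ => this i, Finset.sum_add_distrib, Finset.sum_add_distrib,
    Finset.sum_const, Finset.card_range]
  ring

lemma min_sum (h : ℕ) :
    ∑ k ∈ Finset.range (2^(h+1)), min (Dw (h+1) k) (Dw (h+1) (k+1)) = 2 * Sw h := by
  rw [show (2:ℕ)^(h+1) = 2*2^h from by ring, sum_range_two_mul]
  have key : ∀ t, min (Dw (h+1) (2*t)) (Dw (h+1) (2*t+1))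
      + min (Dw (h+1) (2*t+1)) (Dw (h+1) (2*t+1+1)) = Dw h t + Dw h (t+1) := by
    intro t
    have e1 : Dw (h+1) (2*t+1+1) = Dw h (t+1) := by
      rw [show 2*t+1+1 = 2*(t+1) from by ring, Dw_even]
    rw [Dw_even, Dw_odd, e1]
    have := Dw_step1 h t
    omega
  rw [Finset.sum_congr rfl fun t _ => key t, Finset.sum_add_distrib]
  have e2 : ∑ t ∈ Finset.range (2^h), Dw h (t+1) = Sw h := by
    have := Finset.sum_range_succ' (Dw h) (2^h)
    have e3 : ∑ k ∈ Finset.range (2^h+1), Dw h k = Sw h + Dw h (2^h) :=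
      Finset.sum_range_succ (Dw h) (2^h)
    have e4 : Dw h (2^h) = 0 := by
      have := Dw_period h 0
      simpa [Dw_zero] using this
    rw [Dw_zero] at this
    omega
  rw [e2]
  unfold Sw
  ring

lemma Sw_rec (h : ℕ) : Sw (h+2) = Sw (h+1) + 2^(h+1) + 2 * Sw h := by
  rw [Sw_succ, min_sum]

lemma Sw_closed : ∀ h : ℕ, 9 * (Sw h : ℤ) = 2^h * (3*h+1) - (-1)^h := by
  have key : ∀ h : ℕ, 9 * (Sw h : ℤ) = 2^h * (3*h+1) - (-1)^h
      ∧ 9 * (Sw (h+1) : ℤ) = 2^(h+1) * (3*(h+1)+1) - (-1)^(h+1) := by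
    intro h
    induction h with
    | zero =>
      constructor
      · norm_num [Sw, Dw]
      · norm_num [Sw, Finset.sum_range_succ, Dw]
    | succ n ih =>
      refine ⟨ih.2, ?_⟩
      have hcast : (Sw (n+2) : ℤ) = Sw (n+1) + 2^(n+1) + 2 * Sw n := by
        have := Sw_rec n
        push_cast [this]
        ring
      have e1 := ih.1
      have e2 := ih.2
      push_cast
      push_cast at e1 e2
      linear_combination 9*hcast + e2 + 2*e1
  exact fun h => (key h).1


/-- The transmission of `0` in `MC(2^h)` (equivalently, the distance spectral radius
of `MC(2^h)`) equals `(2^h (3h + 1) - (-1)^h) / 9`. -/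
theorem MC_two_transmission (h : ℕ) (hh : 1 ≤ h) :
    (9 * ∑ v : ZMod (2 ^ h), ((MCGraph 2 h).dist 0 v : ℤ)) =
      2 ^ h * (3 * h + 1) - (-1) ^ h := by
  have hsum : ∑ v : ZMod (2 ^ h), ((MCGraph 2 h).dist 0 v : ℤ)
      = ∑ k ∈ Finset.range (2^h), (Dw h k : ℤ) := by
    rw [show (Finset.univ : Finset (ZMod (2^h))) = Finset.univ from rfl]
    refine Finset.sum_bij' (fun (v : ZMod (2^h)) _ => v.val)
      (fun k _ => (k : ZMod (2^h))) ?_ ?_ ?_ ?_ ?_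
    · intro v _
      exact Finset.mem_range.mpr v.val_lt
    · intro k _
      exact Finset.mem_univ _
    · intro v _
      exact ZMod.natCast_rightInverse v
    · intro k hk
      exact ZMod.val_cast_of_lt (Finset.mem_range.mp hk)
    · intro v _
      rw [MC_dist_eq]
  rw [hsum]
  have : (Sw h : ℤ) = ∑ k ∈ Finset.range (2^h), (Dw h k : ℤ) := by
    unfold Sw
    push_cast
    rfl
  rw [← this]
  exact Sw_closed h
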